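/- arXiv:2309.03537 — 5 statements merged into one kernel-verified Lean document; each statement's English description precedes it below -/
import Mathlib

section
/- Let H be a real inner product space and let {φ_i}_{i∈I} be a finite family of vectors in H. Then ‖f‖² = Σ_{i∈I} ⟨f, φ_i⟩² holds for every f ∈ H if and only if f = Σ_{i∈I} ⟨f, φ_i⟩ φ_i holds for every f ∈ H. -/
/-!
The frame operator `S f = ∑ i, ⟪f, φ i⟫ • φ i` is symmetric and satisfies
`⟪S f, f⟫ = ∑ i, ⟪f, φ i⟫ ^ 2`. So the family is a tight frame iff the quadratic form of the
symmetric operator `S - 1` vanishes, which by polarization happens iff `S = 1`, i.e. iff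
every `f` is reconstructed as `S f`.
-/

open RealInnerProductSpace

section FrameOperator

variable {H : Type*} [NormedAddCommGroup H] [InnerProductSpace ℝ H] {ι : Type*} [Fintype ι]

noncomputable def frameOperator (φ : ι → H) : H →ₗ[ℝ] H :=
  ∑ i, (innerₗ H (φ i)).smulRight (φ i)

theorem frameOperator_apply (φ : ι → H) (f : H) :
    frameOperator φ f = ∑ i, ⟪f, φ i⟫ • φ i := by
  simp only [frameOperator, LinearMap.sum_apply, LinearMap.smulRight_apply, innerₗ_apply_apply,
    real_inner_comm f]

theorem inner_frameOperator_left (φ : ι → H) (f g : H) :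
    ⟪frameOperator φ f, g⟫ = ∑ i, ⟪f, φ i⟫ * ⟪g, φ i⟫ := by
  rw [frameOperator_apply, sum_inner]
  exact Finset.sum_congr rfl fun i _ => by rw [real_inner_smul_left, real_inner_comm g]

theorem isSymmetric_frameOperator (φ : ι → H) : (frameOperator φ).IsSymmetric := fun f g => by
  rw [inner_frameOperator_left, real_inner_comm, inner_frameOperator_left]
  exact Finset.sum_congr rfl fun i _ => mul_comm _ _

theorem inner_frameOperator_self (φ : ι → H) (f : H) :
    ⟪frameOperator φ f, f⟫ = ∑ i, ⟪f, φ i⟫ ^ 2 := by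
  simp only [inner_frameOperator_left, sq]

end FrameOperator

theorem LinearMap.IsSymmetric.eq_one_iff_inner_map_self {H : Type*} [NormedAddCommGroup H]
    [InnerProductSpace ℝ H] {T : H →ₗ[ℝ] H} (hT : T.IsSymmetric) :
    T = 1 ↔ ∀ f, ⟪T f, f⟫ = ‖f‖ ^ 2 := by
  have hT1 : (T - 1).IsSymmetric := hT.sub LinearMap.IsSymmetric.id
  rw [← sub_eq_zero, ← hT1.inner_map_self_eq_zero]
  simp only [LinearMap.sub_apply, Module.End.one_apply, inner_sub_left, sub_eq_zero,
    real_inner_self_eq_norm_sq]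

/-- A finite family of vectors in a real inner product space is a (normalized) tight frame,
i.e. `‖f‖² = ∑ i, ⟪f, φ i⟫²` for all `f`, if and only if the perfect-reconstruction identity
`f = ∑ i, ⟪f, φ i⟫ • φ i` holds for all `f`. -/
theorem tight_frame_iff_reconstruction {H : Type*} [NormedAddCommGroup H]
    [InnerProductSpace ℝ H] {ι : Type*} [Fintype ι] (φ : ι → H) :
    (∀ f : H, ‖f‖ ^ 2 = ∑ i, ⟪f, φ i⟫ ^ 2) ↔
      (∀ f : H, f = ∑ i, ⟪f, φ i⟫ • φ i) := by
  calc (∀ f : H, ‖f‖ ^ 2 = ∑ i, ⟪f, φ i⟫ ^ 2)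
      ↔ frameOperator φ = 1 := by
        simp only [(isSymmetric_frameOperator φ).eq_one_iff_inner_map_self,
          inner_frameOperator_self, eq_comm]
    _ ↔ ∀ f : H, f = ∑ i, ⟪f, φ i⟫ • φ i := by
        simp only [LinearMap.ext_iff, Module.End.one_apply, frameOperator_apply, eq_comm]
end

section
/- Let A ∈ ℝ^{m₁×m} and B ∈ ℝ^{m₂×m} with 1 ≤ m₁ < m. Suppose the rows of A form an orthonormal set in ℝ^m, every row of B is orthogonal to every row of A, and BᵀB = I_m − AᵀA. Then ℝ^m is the orthogonal direct sum of the row span of A and the row span of B, the row span of B equals the orthogonal complement of the row span of A, and the rows of B form a tight frame for the row span of B. -/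
open Matrix

lemma dot_span_zero {n ι : Type*} [Fintype n] (v : ι → (n → ℝ)) (y : n → ℝ)
    (h : ∀ i, v i ⬝ᵥ y = 0) :
    ∀ x ∈ Submodule.span ℝ (Set.range v), x ⬝ᵥ y = 0 := by
  intro x hx
  induction hx using Submodule.span_induction with
  | mem x hx => obtain ⟨i, rfl⟩ := hx; exact h i
  | zero => simp
  | add a b _ _ ha hb => simp [add_dotProduct, ha, hb]
  | smul c a _ ha => simp [smul_dotProduct, ha]

lemma vecMul_transpose_mul {m₁ m : ℕ} (A : Matrix (Fin m₁) (Fin m) ℝ) (x : Fin m → ℝ) :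
    x ᵥ* (Aᵀ * A) = ∑ k, (x ⬝ᵥ A k) • A k := by
  ext c
  simp only [vecMul, dotProduct, Matrix.mul_apply, transpose_apply, Finset.sum_apply,
    Pi.smul_apply, smul_eq_mul, Finset.mul_sum, Finset.sum_mul]
  rw [Finset.sum_comm]
  apply Finset.sum_congr rfl
  intro k _
  apply Finset.sum_congr rfl
  intro l _
  ring

/-- ('If' direction of Lemma 1, reduced to `ℝ^m`.) Suppose the rows of `A ∈ ℝ^{m₁×m}`
are orthonormal, every row of `B ∈ ℝ^{m₂×m}` is orthogonal to every row of `A`, and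
`BᵀB = I − AᵀA`. Then `ℝ^m` is the orthogonal direct sum of the row span of `A` and the
row span of `B`, the row span of `B` is the orthogonal complement of the row span of `A`,
and the rows of `B` form a tight frame for the row span of `B`. -/
theorem orthogonal_direct_sum_and_tight_frame_of_uep {m₁ m₂ m : ℕ}
    (hm₁ : 1 ≤ m₁) (hm : m₁ < m)
    (A : Matrix (Fin m₁) (Fin m) ℝ) (B : Matrix (Fin m₂) (Fin m) ℝ)
    (hA : ∀ i j : Fin m₁, A i ⬝ᵥ A j = if i = j then 1 else 0)
    (hAB : ∀ (i : Fin m₂) (j : Fin m₁), B i ⬝ᵥ A j = 0)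
    (hB : Bᵀ * B = 1 - Aᵀ * A) :
    (Submodule.span ℝ (Set.range fun i => A i) ⊔
       Submodule.span ℝ (Set.range fun i => B i) = ⊤) ∧
    (Submodule.span ℝ (Set.range fun i => A i) ⊓
       Submodule.span ℝ (Set.range fun i => B i) = ⊥) ∧
    (∀ x ∈ Submodule.span ℝ (Set.range fun i => A i),
       ∀ y ∈ Submodule.span ℝ (Set.range fun i => B i), x ⬝ᵥ y = 0) ∧
    (∀ x : Fin m → ℝ,
       x ∈ Submodule.span ℝ (Set.range fun i => B i) ↔
       ∀ y ∈ Submodule.span ℝ (Set.range fun i => A i), x ⬝ᵥ y = 0) ∧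
    (∀ f ∈ Submodule.span ℝ (Set.range fun i => B i),
       f ⬝ᵥ f = ∑ i : Fin m₂, (f ⬝ᵥ B i) ^ 2) := by
  set SA := Submodule.span ℝ (Set.range fun i => A i) with hSA
  set SB := Submodule.span ℝ (Set.range fun i => B i) with hSB
  -- decomposition of any vector
  have hdec : ∀ x : Fin m → ℝ,
      x = (∑ k, (x ⬝ᵥ A k) • A k) + ∑ i, (x ⬝ᵥ B i) • B i := by
    intro x
    have h1 : x ᵥ* (Aᵀ * A) + x ᵥ* (Bᵀ * B) = x := by
      rw [hB]
      rw [← Matrix.vecMul_add]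
      simp
    rw [vecMul_transpose_mul A x, vecMul_transpose_mul B x] at h1
    exact h1.symm
  have hAmem : ∀ k, A k ∈ SA := fun k => Submodule.subset_span ⟨k, rfl⟩
  have hBmem : ∀ i, B i ∈ SB := fun i => Submodule.subset_span ⟨i, rfl⟩
  -- orthogonality
  have horth : ∀ x ∈ SA, ∀ y ∈ SB, x ⬝ᵥ y = 0 := by
    intro x hx y hy
    have hxB : ∀ i, B i ⬝ᵥ x = 0 := by
      intro i
      have := dot_span_zero (fun j => A j) (B i)
        (fun j => by rw [dotProduct_comm]; exact hAB i j) x hx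
      rw [dotProduct_comm]; exact this
    rw [dotProduct_comm]
    exact dot_span_zero (fun i => B i) x hxB y hy
  -- sup = top
  refine ⟨?_, ?_, horth, ?_, ?_⟩
  · rw [eq_top_iff]
    intro x _
    rw [hdec x]
    exact Submodule.add_mem _
      (Submodule.mem_sup_left (Submodule.sum_mem _ fun k _ =>
        Submodule.smul_mem _ _ (hAmem k)))
      (Submodule.mem_sup_right (Submodule.sum_mem _ fun i _ =>
        Submodule.smul_mem _ _ (hBmem i)))
  · rw [eq_bot_iff]
    intro x hx
    have : x ⬝ᵥ x = 0 := horth x hx.1 x hx.2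
    simpa using (dotProduct_self_eq_zero.mp this)
  · intro x
    constructor
    · intro hx y hy
      rw [dotProduct_comm]
      exact horth y hy x hx
    · intro h
      have hxA : ∀ k, x ⬝ᵥ A k = 0 := fun k => h (A k) (hAmem k)
      have := hdec x
      simp only [hxA, zero_smul, Finset.sum_const_zero, zero_add] at this
      rw [this]
      exact Submodule.sum_mem _ fun i _ => Submodule.smul_mem _ _ (hBmem i)
  · intro f hf
    have hfA : ∀ k, f ⬝ᵥ A k = 0 := by
      intro k
      rw [dotProduct_comm]
      exact horth (A k) (hAmem k) f hf
    have hd := hdec f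
    simp only [hfA, zero_smul, Finset.sum_const_zero, zero_add] at hd
    have hsum : f ⬝ᵥ (∑ i, (f ⬝ᵥ B i) • B i) = ∑ i, (f ⬝ᵥ B i) * (f ⬝ᵥ B i) := by
      simp only [dotProduct, Finset.sum_apply, Pi.smul_apply, smul_eq_mul, Finset.mul_sum]
      rw [Finset.sum_comm]
      exact Finset.sum_congr rfl fun i _ => Finset.sum_congr rfl fun l _ => by ring
    nth_rewrite 2 [hd]
    rw [hsum]
    exact Finset.sum_congr rfl fun i _ => (sq (f ⬝ᵥ B i)).symm
end

section
/- Let A ∈ ℝ^{m₁×m} and B ∈ ℝ^{m₂×m} with 1 ≤ m₁ < m. Suppose the rows of A form an orthonormal set in ℝ^m, every row of B is orthogonal to every row of A, ℝ^m is the direct sum of the row span of A and the row span of B, and the rows of B form a tight frame for the row span of B. Then BᵀB = I_m − AᵀA. -/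
open Matrix

/-- ('Only if' direction of Lemma 1, reduced to `ℝ^m`.) Suppose the rows of
`A ∈ ℝ^{m₁×m}` are orthonormal, every row of `B ∈ ℝ^{m₂×m}` is orthogonal to every row
of `A`, `ℝ^m` is the direct sum of the row span of `A` and the row span of `B`, and the
rows of `B` form a tight frame for the row span of `B`. Then `BᵀB = I − AᵀA`. -/
theorem uep_of_direct_sum_and_tight_frame {m₁ m₂ m : ℕ}
    (hm₁ : 1 ≤ m₁) (hm : m₁ < m)
    (A : Matrix (Fin m₁) (Fin m) ℝ) (B : Matrix (Fin m₂) (Fin m) ℝ)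
    (hA : ∀ i j : Fin m₁, A i ⬝ᵥ A j = if i = j then 1 else 0)
    (hAB : ∀ (i : Fin m₂) (j : Fin m₁), B i ⬝ᵥ A j = 0)
    (hsup : Submodule.span ℝ (Set.range fun i => A i) ⊔
       Submodule.span ℝ (Set.range fun i => B i) = ⊤)
    (hinf : Submodule.span ℝ (Set.range fun i => A i) ⊓
       Submodule.span ℝ (Set.range fun i => B i) = ⊥)
    (htf : ∀ f ∈ Submodule.span ℝ (Set.range fun i => B i),
       f ⬝ᵥ f = ∑ i : Fin m₂, (f ⬝ᵥ B i) ^ 2) :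
    Bᵀ * B = 1 - Aᵀ * A := by
  set W := Submodule.span ℝ (Set.range fun i => B i) with hW
  -- BᵀB maps everything into W
  have hmem : ∀ w : Fin m₂ → ℝ, Bᵀ *ᵥ w ∈ W := by
    intro w
    have : Bᵀ *ᵥ w = ∑ i, w i • B i := by
      funext j
      simp [Matrix.mulVec_transpose, Matrix.vecMul, dotProduct,
        Finset.sum_apply]
    rw [this]
    exact Submodule.sum_mem _ fun i _ =>
      Submodule.smul_mem _ _ (Submodule.subset_span ⟨i, rfl⟩)
  -- quadratic form of BᵀB
  have hS : ∀ f g : Fin m → ℝ,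
      f ⬝ᵥ ((Bᵀ * B) *ᵥ g) = ∑ i, (f ⬝ᵥ B i) * (g ⬝ᵥ B i) := by
    intro f g
    rw [← Matrix.mulVec_mulVec, Matrix.dotProduct_mulVec, Matrix.vecMul_transpose]
    simp [dotProduct, Matrix.mulVec, Finset.mul_sum, mul_comm]
  -- polarization: BᵀB acts as identity on W against W
  have hpol : ∀ f ∈ W, ∀ g ∈ W, f ⬝ᵥ ((Bᵀ * B) *ᵥ g - g) = 0 := by
    intro f hf g hg
    have e : ∀ v : Fin m → ℝ, ∑ i, (v ⬝ᵥ B i) ^ 2 = v ⬝ᵥ ((Bᵀ * B) *ᵥ v) := by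
      intro v; rw [hS]; simp [sq]
    have h1 := htf f hf
    have h2 := htf g hg
    have h3 := htf (f + g) (W.add_mem hf hg)
    rw [e] at h1 h2 h3
    have hsym : g ⬝ᵥ ((Bᵀ * B) *ᵥ f) = f ⬝ᵥ ((Bᵀ * B) *ᵥ g) := by
      rw [hS, hS]
      exact Finset.sum_congr rfl fun i _ => mul_comm _ _
    have hexp : f ⬝ᵥ ((Bᵀ * B) *ᵥ g) = f ⬝ᵥ g := by
      simp only [Matrix.mulVec_add, add_dotProduct, dotProduct_add] at h3
      have hc : g ⬝ᵥ f = f ⬝ᵥ g := dotProduct_comm g f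
      linarith [h1, h2, h3, hsym, hc]
    rw [dotProduct_sub, hexp, sub_self]
  -- hence BᵀB fixes rows of B
  have hBB : ∀ k, (Bᵀ * B) *ᵥ B k = B k := by
    intro k
    have hk : B k ∈ W := Submodule.subset_span ⟨k, rfl⟩
    have hd : (Bᵀ * B) *ᵥ B k - B k ∈ W :=
      W.sub_mem (by rw [← Matrix.mulVec_mulVec]; exact hmem _) hk
    have h0 := hpol _ hd _ hk
    rw [dotProduct_sub] at h0
    have h0' : ((Bᵀ * B) *ᵥ B k - B k) ⬝ᵥ ((Bᵀ * B) *ᵥ B k - B k) = 0 := by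
      rw [dotProduct_sub]; exact h0
    rw [dotProduct_self_eq_zero] at h0'
    exact sub_eq_zero.mp h0'
  -- B annihilates rows of A
  have hBA : ∀ j, B *ᵥ A j = 0 := by
    intro j; funext i
    simpa [Matrix.mulVec, dotProduct] using hAB i j
  -- A *ᵥ A j = single
  have hAAj : ∀ j, A *ᵥ A j = Pi.single j 1 := by
    intro j; funext i
    have := hA i j
    simp only [Matrix.mulVec, dotProduct] at *
    rw [this]
    by_cases h : i = j <;> simp [h, Pi.single_apply]
  have hAt : ∀ j : Fin m₁, Aᵀ *ᵥ Pi.single j 1 = A j := by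
    intro j; funext k
    simp [Matrix.mulVec_single]
  -- agreement on all vectors
  have key : ∀ v : Fin m → ℝ, (Bᵀ * B) *ᵥ v = (1 - Aᵀ * A) *ᵥ v := by
    intro v
    have hv : v ∈ (⊤ : Submodule ℝ (Fin m → ℝ)) := trivial
    rw [← hsup, ← Submodule.span_union] at hv
    induction hv using Submodule.span_induction with
    | mem x hx =>
      rcases hx with ⟨j, rfl⟩ | ⟨k, rfl⟩
      · rw [← Matrix.mulVec_mulVec, hBA j]
        rw [Matrix.sub_mulVec, Matrix.one_mulVec, ← Matrix.mulVec_mulVec,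
          hAAj j, hAt j]
        simp
      · have hABk : A *ᵥ B k = 0 := by
          funext i
          have := hAB k i
          rw [dotProduct_comm] at this
          simpa [Matrix.mulVec, dotProduct] using this
        rw [hBB k, Matrix.sub_mulVec, Matrix.one_mulVec, ← Matrix.mulVec_mulVec,
          hABk]
        simp
    | zero => simp
    | add x y hx hy ihx ihy => rw [Matrix.mulVec_add, Matrix.mulVec_add, ihx, ihy]
    | smul c x hx ih => rw [Matrix.mulVec_smul, Matrix.mulVec_smul, ih]
  ext i j
  have := congrFun (key (Pi.single j 1)) i
  simpa [Matrix.mulVec_single] using this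
end

section
/- Let {ξ_i}_{i=1}^m be an orthonormal set in ℝ^n, let C ∈ ℝ^{m×n} be the matrix whose i-th row is ξ_i, and let A ∈ ℝ^{m₁×m}, B ∈ ℝ^{m₂×m} with 1 ≤ m₁ < m be such that the rows of A form an orthonormal set in ℝ^m and every row of B is orthogonal to every row of A. Set Aᶜ := AC and Bᶜ := BC. Then the following two conditions together — (i) span{ξ_i}_{i=1}^m is the direct sum of the row span of Aᶜ and the row span of Bᶜ, and (ii) the rows of Bᶜ form a tight frame for the row span of Bᶜ — hold if and only if BᵀB = I_m − AᵀA. -/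
open Matrix

private lemma tmt_mulVec {m k : ℕ} (M : Matrix (Fin k) (Fin m) ℝ) (x : Fin m → ℝ) :
    (Mᵀ * M) *ᵥ x = ∑ i, (M i ⬝ᵥ x) • M i := by
  funext j
  simp only [mulVec, dotProduct, Matrix.mul_apply, transpose_apply, Finset.sum_apply,
    Pi.smul_apply, smul_eq_mul, Finset.sum_mul, Finset.mul_sum]
  rw [Finset.sum_comm]
  exact Finset.sum_congr rfl fun i _ => Finset.sum_congr rfl fun l _ => by ring

private lemma dot_sum {m k : ℕ} (v : Fin m → ℝ) (f : Fin k → Fin m → ℝ) :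
    v ⬝ᵥ ∑ i, f i = ∑ i, v ⬝ᵥ f i := by
  simp only [dotProduct, Finset.sum_apply, Finset.mul_sum]
  exact Finset.sum_comm

private lemma core_lemma {m m₁ m₂ : ℕ} (A : Matrix (Fin m₁) (Fin m) ℝ)
    (B : Matrix (Fin m₂) (Fin m) ℝ)
    (hA : ∀ i j : Fin m₁, A i ⬝ᵥ A j = if i = j then 1 else 0)
    (hAB : ∀ (i : Fin m₂) (j : Fin m₁), B i ⬝ᵥ A j = 0) :
    (((⊤ : Submodule ℝ (Fin m → ℝ)) =
        Submodule.span ℝ (Set.range fun i => A i) ⊔ Submodule.span ℝ (Set.range fun i => B i)) ∧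
     (Submodule.span ℝ (Set.range fun i => A i) ⊓ Submodule.span ℝ (Set.range fun i => B i) = ⊥) ∧
     (∀ g ∈ Submodule.span ℝ (Set.range fun i => B i),
        g ⬝ᵥ g = ∑ i : Fin m₂, (g ⬝ᵥ B i) ^ 2)) ↔
    Bᵀ * B = 1 - Aᵀ * A := by
  set SA := Submodule.span ℝ (Set.range fun i => A i) with hSA
  set SB := Submodule.span ℝ (Set.range fun i => B i) with hSB
  have hArow : ∀ j, A j ∈ SA := fun j => Submodule.subset_span ⟨j, rfl⟩
  have hBrow : ∀ i, B i ∈ SB := fun i => Submodule.subset_span ⟨i, rfl⟩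
  have hdotA : ∀ b ∈ SB, ∀ j, A j ⬝ᵥ b = 0 := by
    intro b hb j
    induction hb using Submodule.span_induction with
    | mem x hx => obtain ⟨i, rfl⟩ := hx; rw [dotProduct_comm]; exact hAB i j
    | zero => simp
    | add x y _ _ hx hy => simp [dotProduct_add, hx, hy]
    | smul c x _ hx => simp [dotProduct_smul, hx]
  have hdotB : ∀ a ∈ SA, ∀ i, B i ⬝ᵥ a = 0 := by
    intro a ha i
    induction ha using Submodule.span_induction with
    | mem x hx => obtain ⟨j, rfl⟩ := hx; exact hAB i j
    | zero => simp
    | add x y _ _ hx hy => simp [dotProduct_add, hx, hy]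
    | smul c x _ hx => simp [dotProduct_smul, hx]
  have horth : ∀ a ∈ SA, ∀ b ∈ SB, a ⬝ᵥ b = 0 := by
    intro a ha b hb
    induction ha using Submodule.span_induction with
    | mem x hx => obtain ⟨j, rfl⟩ := hx; exact hdotA b hb j
    | zero => simp
    | add x y _ _ hx hy => simp [add_dotProduct, hx, hy]
    | smul c x _ hx => simp [smul_dotProduct, hx]
  have projA : ∀ a ∈ SA, (Aᵀ * A) *ᵥ a = a := by
    intro a ha
    induction ha using Submodule.span_induction with
    | mem x hx =>
        obtain ⟨j, rfl⟩ := hx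
        rw [tmt_mulVec]
        have : ∀ i : Fin m₁, (A i ⬝ᵥ A j) • A i = if i = j then A j else 0 := by
          intro i
          rw [hA i j]
          by_cases h : i = j <;> simp [h]
        rw [Finset.sum_congr rfl fun i _ => this i]
        simp
    | zero => simp
    | add x y _ _ hx hy => simp [mulVec_add, hx, hy]
    | smul c x _ hx => simp [mulVec_smul, hx]
  have hAtAmem : ∀ x, (Aᵀ * A) *ᵥ x ∈ SA := by
    intro x
    rw [tmt_mulVec]
    exact Submodule.sum_mem _ fun i _ => Submodule.smul_mem _ _ (hArow i)
  have hBtBmem : ∀ x, (Bᵀ * B) *ᵥ x ∈ SB := by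
    intro x
    rw [tmt_mulVec]
    exact Submodule.sum_mem _ fun i _ => Submodule.smul_mem _ _ (hBrow i)
  have hAtAzero : ∀ b ∈ SB, (Aᵀ * A) *ᵥ b = 0 := by
    intro b hb
    rw [tmt_mulVec]
    simp [hdotA b hb]
  have hBtBzero : ∀ a ∈ SA, (Bᵀ * B) *ᵥ a = 0 := by
    intro a ha
    rw [tmt_mulVec]
    simp [hdotB a ha]
  have hdotsum : ∀ g b : Fin m → ℝ, g ⬝ᵥ ((Bᵀ * B) *ᵥ b) = ∑ i, (g ⬝ᵥ B i) * (b ⬝ᵥ B i) := by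
    intro g b
    rw [tmt_mulVec, dot_sum]
    exact Finset.sum_congr rfl fun i _ => by
      rw [dotProduct_smul, smul_eq_mul, dotProduct_comm b (B i), mul_comm]
  constructor
  · rintro ⟨h1, -, h3⟩
    have pol : ∀ g ∈ SB, ∀ b ∈ SB, g ⬝ᵥ b = ∑ i, (g ⬝ᵥ B i) * (b ⬝ᵥ B i) := by
      intro g hg b hb
      have h₁ := h3 (g + b) (SB.add_mem hg hb)
      have h₂ := h3 g hg
      have h₃ := h3 b hb
      simp only [add_dotProduct, dotProduct_add] at h₁
      have hexp : ∑ i : Fin m₂, (g ⬝ᵥ B i + b ⬝ᵥ B i) ^ 2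
          = (∑ i, (g ⬝ᵥ B i) ^ 2) + 2 * (∑ i, (g ⬝ᵥ B i) * (b ⬝ᵥ B i)) + ∑ i, (b ⬝ᵥ B i) ^ 2 := by
        rw [Finset.mul_sum, ← Finset.sum_add_distrib, ← Finset.sum_add_distrib]
        exact Finset.sum_congr rfl fun i _ => by ring
      rw [hexp, ← h₂, ← h₃] at h₁
      have hc : g ⬝ᵥ b = b ⬝ᵥ g := dotProduct_comm g b
      linarith
    have projB : ∀ b ∈ SB, (Bᵀ * B) *ᵥ b = b := by
      intro b hb
      have hd : ((Bᵀ * B) *ᵥ b - b) ⬝ᵥ ((Bᵀ * B) *ᵥ b - b) = 0 := by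
        have hmem : (Bᵀ * B) *ᵥ b - b ∈ SB := SB.sub_mem (hBtBmem b) hb
        rw [dotProduct_sub, hdotsum, pol _ hmem b hb, sub_self]
      exact sub_eq_zero.mp (dotProduct_self_eq_zero.mp hd)
    have key : ∀ x : Fin m → ℝ, (Bᵀ * B) *ᵥ x = (1 - Aᵀ * A) *ᵥ x := by
      intro x
      have hx : x ∈ SA ⊔ SB := h1 ▸ Submodule.mem_top
      obtain ⟨a, ha, b, hb, rfl⟩ := Submodule.mem_sup.mp hx
      rw [mulVec_add, hBtBzero a ha, projB b hb, zero_add, sub_mulVec, one_mulVec,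
        mulVec_add, projA a ha, hAtAzero b hb, add_zero]
      abel
    ext i j
    have := congrFun (key (Pi.single j 1)) i
    simpa [mulVec, dotProduct, Pi.single_apply] using this
  · intro hEq
    have hsplit : ∀ x : Fin m → ℝ, x = (Aᵀ * A) *ᵥ x + (Bᵀ * B) *ᵥ x := by
      intro x
      rw [hEq, sub_mulVec, one_mulVec]
      abel
    refine ⟨?_, ?_, ?_⟩
    · refine le_antisymm (fun x _ => ?_) le_top
      rw [hsplit x]
      exact Submodule.add_mem_sup (hAtAmem x) (hBtBmem x)
    · rw [eq_bot_iff]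
      intro x hx
      obtain ⟨hxA, hxB⟩ := hx
      have : x ⬝ᵥ x = 0 := horth x hxA x hxB
      simpa using dotProduct_self_eq_zero.mp this
    · intro g hg
      have h1 : g ⬝ᵥ ((Bᵀ * B) *ᵥ g) = ∑ i, (g ⬝ᵥ B i) ^ 2 := by
        rw [hdotsum]
        exact Finset.sum_congr rfl fun i _ => (sq (g ⬝ᵥ B i)).symm
      have h2 : (Bᵀ * B) *ᵥ g = g := by
        have := hsplit g
        rw [hAtAzero g hg, zero_add] at this
        exact this.symm
      rw [← h1, h2]

/-- (Lemma 1 of the paper.) Let `{ξ_i}` be an orthonormal set in `ℝ^n` with stacking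
matrix `C`, let the rows of `A ∈ ℝ^{m₁×m}` be orthonormal, and let every row of
`B ∈ ℝ^{m₂×m}` be orthogonal to every row of `A`. Then `span{ξ_i}` is the direct sum of
the row span of `AC` and the row span of `BC` with the rows of `BC` a tight frame for
their span, if and only if `BᵀB = I − AᵀA`. -/
theorem span_direct_sum_and_tight_frame_iff_uep {n m m₁ m₂ : ℕ}
    (hm₁ : 1 ≤ m₁) (hm : m₁ < m)
    (ξ : Fin m → Fin n → ℝ)
    (hξ : ∀ i j : Fin m, ξ i ⬝ᵥ ξ j = if i = j then 1 else 0)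
    (C : Matrix (Fin m) (Fin n) ℝ) (hC : ∀ i, C i = ξ i)
    (A : Matrix (Fin m₁) (Fin m) ℝ) (B : Matrix (Fin m₂) (Fin m) ℝ)
    (hA : ∀ i j : Fin m₁, A i ⬝ᵥ A j = if i = j then 1 else 0)
    (hAB : ∀ (i : Fin m₂) (j : Fin m₁), B i ⬝ᵥ A j = 0) :
    ((Submodule.span ℝ (Set.range ξ) =
        Submodule.span ℝ (Set.range fun i => (A * C) i) ⊔
          Submodule.span ℝ (Set.range fun i => (B * C) i)) ∧
     (Submodule.span ℝ (Set.range fun i => (A * C) i) ⊓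
        Submodule.span ℝ (Set.range fun i => (B * C) i) = ⊥) ∧
     (∀ f ∈ Submodule.span ℝ (Set.range fun i => (B * C) i),
        f ⬝ᵥ f = ∑ i : Fin m₂, (f ⬝ᵥ (B * C) i) ^ 2)) ↔
    Bᵀ * B = 1 - Aᵀ * A := by
  set φ := C.vecMulLinear with hφ
  have hφapp : ∀ x : Fin m → ℝ, φ x = x ᵥ* C := fun x => rfl
  have hCC : C * Cᵀ = 1 := by
    ext i j
    have : C i ⬝ᵥ C j = if i = j then 1 else 0 := by rw [hC, hC]; exact hξ i j
    simpa [Matrix.mul_apply, transpose_apply, dotProduct, Matrix.one_apply] using this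
  have hdotφ : ∀ x y : Fin m → ℝ, (x ᵥ* C) ⬝ᵥ (y ᵥ* C) = x ⬝ᵥ y := by
    intro x y
    calc (x ᵥ* C) ⬝ᵥ (y ᵥ* C) = (x ᵥ* C) ⬝ᵥ (Cᵀ *ᵥ y) := by rw [mulVec_transpose]
      _ = ((x ᵥ* C) ᵥ* Cᵀ) ⬝ᵥ y := dotProduct_mulVec _ _ _
      _ = (x ᵥ* (C * Cᵀ)) ⬝ᵥ y := by rw [vecMul_vecMul]
      _ = x ⬝ᵥ y := by rw [hCC, vecMul_one]
  have hφinj : Function.Injective φ := by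
    intro x y hxy
    have h0 : φ (x - y) = 0 := by rw [map_sub, hxy, sub_self]
    have h1 : (x - y) ⬝ᵥ (x - y) = 0 := by
      rw [← hdotφ (x - y) (x - y), ← hφapp, h0]
      simp
    have := dotProduct_self_eq_zero.mp h1
    exact sub_eq_zero.mp this
  have hrow : ∀ {k : ℕ} (M : Matrix (Fin k) (Fin m) ℝ) (i : Fin k), (M * C) i = φ (M i) := by
    intro k M i
    funext j
    simp [hφapp, Matrix.mul_apply, vecMul, dotProduct]
  have spanM : ∀ {k : ℕ} (M : Matrix (Fin k) (Fin m) ℝ),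
      Submodule.span ℝ (Set.range fun i => (M * C) i)
        = Submodule.map φ (Submodule.span ℝ (Set.range fun i => M i)) := by
    intro k M
    rw [show (Set.range fun i => (M * C) i) = φ '' (Set.range fun i => M i) by
      rw [← Set.range_comp]
      exact congrArg _ (funext fun i => hrow M i), Submodule.span_image]
  have htop : Submodule.span ℝ (Set.range fun i : Fin m => (Pi.single i 1 : Fin m → ℝ)) = ⊤ := by
    have h := (Pi.basisFun ℝ (Fin m)).span_eq
    rw [show ⇑(Pi.basisFun ℝ (Fin m)) = fun i => Pi.single i 1 from
      funext fun i => Pi.basisFun_apply ℝ (Fin m) i] at h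
    exact h
  have spanξeq : Submodule.span ℝ (Set.range ξ)
      = Submodule.map φ (⊤ : Submodule ℝ (Fin m → ℝ)) := by
    have h0 : Set.range ξ = φ '' Set.range (fun i : Fin m => (Pi.single i 1 : Fin m → ℝ)) := by
      rw [← Set.range_comp]
      refine congrArg _ (funext fun i => ?_)
      show ξ i = φ (Pi.single i 1)
      rw [hφapp, ← hC i]
      funext j
      simp [vecMul, dotProduct, Pi.single_apply]
    rw [h0, Submodule.span_image, htop]
  rw [spanξeq, spanM A, spanM B, ← core_lemma A B hA hAB]
  set SA := Submodule.span ℝ (Set.range fun i => A i) with hSAdef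
  set SB := Submodule.span ℝ (Set.range fun i => B i) with hSBdef
  refine and_congr ?_ (and_congr ?_ ?_)
  · rw [← Submodule.map_sup]
    exact ⟨fun h => Submodule.map_injective_of_injective hφinj h, fun h => congrArg _ h⟩
  · rw [← Submodule.map_inf φ hφinj]
    constructor
    · intro h
      apply Submodule.map_injective_of_injective hφinj
      rw [h, Submodule.map_bot]
    · intro h
      rw [h, Submodule.map_bot]
  · constructor
    · intro h g hg
      have := h (φ g) (Submodule.mem_map_of_mem hg)
      simpa only [hrow B, hφapp, hdotφ] using this
    · rintro h f hf
      obtain ⟨g, hg, rfl⟩ := hf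
      simpa only [hrow B, hφapp, hdotφ] using h g hg
end

section
/- Let X_1, …, X_m be mutually orthogonal subspaces of ℝ^n, each of dimension r ≥ 1, and for each i let {ξ_{i,j}}_{j=1}^r be an orthonormal basis of X_i. Let A ∈ ℝ^{m₁×m}, B ∈ ℝ^{m₂×m} with 1 ≤ m₁ < m satisfy: the rows of A form an orthonormal set in ℝ^m, every row of B is orthogonal to every row of A, and BᵀB = I_m − AᵀA. For 1 ≤ j ≤ r let Ξ^{(j)} ∈ ℝ^{m×n} be the matrix whose i-th row is ξ_{i,j}, and define Aᶜ ∈ ℝ^{m₁r×n} by stacking the matrices AΞ^{(1)}, …, AΞ^{(r)} and Bᶜ ∈ ℝ^{m₂r×n} by stacking BΞ^{(1)}, …, BΞ^{(r)}. Let V be the row span of Aᶜ and W the row span of Bᶜ. Then X_1 ⊕ ⋯ ⊕ X_m = V ⊕ W with V orthogonal to W, the rows of Aᶜ form an orthonormal basis of V (so dim V = m₁r), and the rows of Bᶜ form a tight frame for W. -/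
open Matrix

/-- The stacked matrix `CONCAT(M Ξ^{(1)}, …, M Ξ^{(r)})`, whose block `j` is the matrix
`M * Ξ^{(j)}` where `Ξ^{(j)}` has `i`-th row `ξ i j`. Row `(j, i)` is row `i` of `M Ξ^{(j)}`. -/
noncomputable def stackedFilter {m₀ m n r : ℕ} (M : Matrix (Fin m₀) (Fin m) ℝ)
    (ξ : Fin m → Fin r → Fin n → ℝ) : Matrix (Fin r × Fin m₀) (Fin n) ℝ :=
  fun p => (M * Matrix.of fun i => ξ i p.1) p.2

/-!
The vectors `ξ i j` form one orthonormal family, and row `(j, a)` of `Mᶜ` is `∑ i, M a i • ξ i j`.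
Hence rows of `Mᶜ` and `Nᶜ` from different blocks `j` are orthogonal, and within a block their
dot products are those of the rows of `M` and `N`: this gives the orthonormality of the rows
of `Aᶜ` and `V ⊥ W`. Since `AᵀA + BᵀB = I`, every `ξ i j` is recovered as
`∑ a, A a i • Aᶜ (j, a) + ∑ b, B b i • Bᶜ (j, b)`, so `V ⊔ W = ⊕ᵢ Xᵢ`. For `f ∈ W` with
coefficients `c j = (f ⬝ᵥ ξ i j)ᵢ`, orthogonality to `V` says `A c j = 0`, so
`‖B c j‖² = c jᵀ (I - AᵀA) c j = ‖c j‖²`, and summing over `j` is Parseval's identity for `f`.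
-/

open Submodule

theorem iSup_span_eq_span_range_uncurry {R ν ι κ : Type*} [CommRing R] (ξ : ι → κ → ν → R) :
    ⨆ i, span R (Set.range (ξ i)) = span R (Set.range fun p : ι × κ => ξ p.1 p.2) := by
  rw [← span_iUnion]
  congr 1
  ext
  simp

section DotProduct

variable {R ν ι κ : Type*} [CommRing R] [Fintype ν]

theorem sum_smul_dotProduct_of_orthonormal [Fintype ι] [DecidableEq ι] {e : ι → ν → R}
    (he : ∀ p q, e p ⬝ᵥ e q = if p = q then 1 else 0) (c : ι → R) (q : ι) :
    (∑ p, c p • e p) ⬝ᵥ e q = c q := by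
  simp [sum_dotProduct, he]

theorem linearIndependent_of_orthonormal [Fintype ι] [DecidableEq ι] [Nontrivial R]
    {e : ι → ν → R} (he : ∀ p q, e p ⬝ᵥ e q = if p = q then 1 else 0) :
    LinearIndependent R e := by
  refine Fintype.linearIndependent_iff.mpr fun c hc q => ?_
  rw [← sum_smul_dotProduct_of_orthonormal he c q, hc, zero_dotProduct]

theorem dotProduct_self_eq_sum_sq_of_mem_span [Fintype ι] [DecidableEq ι] {e : ι → ν → R}
    (he : ∀ p q, e p ⬝ᵥ e q = if p = q then 1 else 0) {f : ν → R}
    (hf : f ∈ span R (Set.range e)) :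
    f ⬝ᵥ f = ∑ p, (f ⬝ᵥ e p) ^ 2 := by
  obtain ⟨c, rfl⟩ := (mem_span_range_iff_exists_fun R).mp hf
  conv_lhs => rw [sum_dotProduct]
  simp [dotProduct_comm _ (∑ p, c p • e p), sum_smul_dotProduct_of_orthonormal he, sq]

theorem dotProduct_eq_zero_of_mem_span {u : ι → ν → R} {v : κ → ν → R}
    (huv : ∀ p q, u p ⬝ᵥ v q = 0) {x y : ν → R}
    (hx : x ∈ span R (Set.range u)) (hy : y ∈ span R (Set.range v)) : x ⬝ᵥ y = 0 := by
  have hv : ∀ p, span R (Set.range v) ≤ LinearMap.ker (dotProductBilin R R (u p)) :=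
    fun p => span_le.mpr <| by rintro _ ⟨q, rfl⟩; simp [huv]
  have hu : span R (Set.range u) ≤ LinearMap.ker ((dotProductBilin R R).flip y) :=
    span_le.mpr <| by rintro _ ⟨p, rfl⟩; exact hv p hy
  exact hu hx

theorem dotProduct_orthonormal_of_orthogonal [DecidableEq ι] [DecidableEq κ]
    {X : ι → Submodule R (ν → R)}
    (hX : ∀ i i', i ≠ i' → ∀ x ∈ X i, ∀ y ∈ X i', x ⬝ᵥ y = 0) {ξ : ι → κ → ν → R}
    (hξ : ∀ i j j', ξ i j ⬝ᵥ ξ i j' = if j = j' then 1 else 0)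
    (hξX : ∀ i j, ξ i j ∈ X i) (i i' : ι) (j j' : κ) :
    ξ i j ⬝ᵥ ξ i' j' = if i = i' ∧ j = j' then 1 else 0 := by
  by_cases h : i = i'
  · subst h
    simp [hξ]
  · simp [h, hX i i' h _ (hξX i j) _ (hξX i' j')]

theorem mulVec_dotProduct_mulVec_self [Fintype ι] [Fintype κ] (B : Matrix κ ι R) (x : ι → R) :
    (B *ᵥ x) ⬝ᵥ (B *ᵥ x) = x ⬝ᵥ ((Bᵀ * B) *ᵥ x) := by
  rw [← mulVec_mulVec, dotProduct_mulVec x Bᵀ, vecMul_transpose]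

theorem mulVec_dotProduct_mulVec_self_of_mulVec_eq_zero [Fintype ι] [Fintype κ] [DecidableEq ι]
    {A : Matrix κ ι R} {B : Matrix ν ι R} (hB : Bᵀ * B = 1 - Aᵀ * A) {x : ι → R}
    (hx : A *ᵥ x = 0) :
    (B *ᵥ x) ⬝ᵥ (B *ᵥ x) = x ⬝ᵥ x := by
  rw [mulVec_dotProduct_mulVec_self, hB, sub_mulVec, one_mulVec, ← mulVec_mulVec, hx,
    mulVec_zero, sub_zero]

end DotProduct

section StackedFilter

variable {n m r k l : ℕ} {ξ : Fin m → Fin r → Fin n → ℝ}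

theorem stackedFilter_apply (M : Matrix (Fin k) (Fin m) ℝ) (p : Fin r × Fin k) :
    stackedFilter M ξ p = ∑ i, M p.2 i • ξ i p.1 := by
  ext
  simp [stackedFilter, mul_apply, Finset.sum_apply]

theorem dotProduct_stackedFilter (M : Matrix (Fin k) (Fin m) ℝ) (f : Fin n → ℝ)
    (p : Fin r × Fin k) :
    f ⬝ᵥ stackedFilter M ξ p = (M *ᵥ fun i => f ⬝ᵥ ξ i p.1) p.2 := by
  rw [stackedFilter_apply, dotProduct_sum]
  simp only [dotProduct_smul, smul_eq_mul]
  rfl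

theorem stackedFilter_dotProduct_stackedFilter
    (hξ : ∀ i i' j j', ξ i j ⬝ᵥ ξ i' j' = if i = i' ∧ j = j' then 1 else 0)
    (M : Matrix (Fin k) (Fin m) ℝ) (N : Matrix (Fin l) (Fin m) ℝ)
    (p : Fin r × Fin k) (q : Fin r × Fin l) :
    stackedFilter M ξ p ⬝ᵥ stackedFilter N ξ q = if p.1 = q.1 then M p.2 ⬝ᵥ N q.2 else 0 := by
  have hrow : ∀ i, stackedFilter M ξ p ⬝ᵥ ξ i q.1 = if p.1 = q.1 then M p.2 i else 0 := by
    intro i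
    rw [stackedFilter_apply, sum_dotProduct]
    by_cases h : p.1 = q.1 <;> simp [h, smul_dotProduct, hξ]
  rw [dotProduct_stackedFilter]
  simp only [hrow]
  by_cases h : p.1 = q.1 <;> simp [h, mulVec, dotProduct, mul_comm]

theorem span_stackedFilter_le (M : Matrix (Fin k) (Fin m) ℝ) :
    span ℝ (Set.range (stackedFilter M ξ)) ≤ span ℝ (Set.range fun p : Fin m × Fin r => ξ p.1 p.2) :=
  span_le.mpr <| by
    rintro _ ⟨p, rfl⟩
    rw [stackedFilter_apply]
    exact sum_mem fun i _ => smul_mem _ _ (subset_span ⟨(i, p.1), rfl⟩)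

theorem sum_smul_stackedFilter (M : Matrix (Fin k) (Fin m) ℝ) (i : Fin m) (j : Fin r) :
    ∑ a, M a i • stackedFilter M ξ (j, a) = ∑ i', (Mᵀ * M) i i' • ξ i' j := by
  simp only [stackedFilter_apply, Finset.smul_sum, smul_smul, mul_apply, transpose_apply,
    Finset.sum_smul]
  exact Finset.sum_comm

theorem span_stackedFilter_sup_span_stackedFilter {A : Matrix (Fin k) (Fin m) ℝ}
    {B : Matrix (Fin l) (Fin m) ℝ} (hAB : Aᵀ * A + Bᵀ * B = 1) :
    span ℝ (Set.range (stackedFilter A ξ)) ⊔ span ℝ (Set.range (stackedFilter B ξ)) =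
      span ℝ (Set.range fun p : Fin m × Fin r => ξ p.1 p.2) := by
  refine le_antisymm (sup_le (span_stackedFilter_le A) (span_stackedFilter_le B)) ?_
  refine span_le.mpr ?_
  rintro _ ⟨⟨i, j⟩, rfl⟩
  have hξ : ξ i j =
      ∑ a, A a i • stackedFilter A ξ (j, a) + ∑ b, B b i • stackedFilter B ξ (j, b) := by
    simp only [sum_smul_stackedFilter, ← Finset.sum_add_distrib, ← add_smul, ← Matrix.add_apply,
      hAB, one_apply, ite_smul, one_smul, zero_smul, Finset.sum_ite_eq, Finset.mem_univ, if_true]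
  show ξ i j ∈ _
  rw [hξ]
  exact add_mem
    (sum_mem fun a _ => mem_sup_left (smul_mem _ _ (subset_span ⟨(j, a), rfl⟩)))
    (sum_mem fun b _ => mem_sup_right (smul_mem _ _ (subset_span ⟨(j, b), rfl⟩)))

theorem dotProduct_self_eq_sum_sq_dotProduct_stackedFilter
    (hξ : ∀ i i' j j', ξ i j ⬝ᵥ ξ i' j' = if i = i' ∧ j = j' then 1 else 0)
    {A : Matrix (Fin k) (Fin m) ℝ} {B : Matrix (Fin l) (Fin m) ℝ} (hB : Bᵀ * B = 1 - Aᵀ * A)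
    {f : Fin n → ℝ} (hf : f ∈ span ℝ (Set.range fun p : Fin m × Fin r => ξ p.1 p.2))
    (hfA : ∀ p, f ⬝ᵥ stackedFilter A ξ p = 0) :
    f ⬝ᵥ f = ∑ p, (f ⬝ᵥ stackedFilter B ξ p) ^ 2 := by
  set c : Fin r → Fin m → ℝ := fun j i => f ⬝ᵥ ξ i j
  have hAc : ∀ j, A *ᵥ c j = 0 := fun j => funext fun a => by
    simpa [dotProduct_stackedFilter] using hfA (j, a)
  calc f ⬝ᵥ f = ∑ p : Fin m × Fin r, (f ⬝ᵥ ξ p.1 p.2) ^ 2 :=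
        dotProduct_self_eq_sum_sq_of_mem_span (fun p q => by simp [hξ, Prod.ext_iff]) hf
    _ = ∑ j, c j ⬝ᵥ c j := by
        rw [Fintype.sum_prod_type, Finset.sum_comm]
        simp [c, dotProduct, sq]
    _ = ∑ j, (B *ᵥ c j) ⬝ᵥ (B *ᵥ c j) := by
        simp_rw [mulVec_dotProduct_mulVec_self_of_mulVec_eq_zero hB (hAc _)]
    _ = ∑ p, (f ⬝ᵥ stackedFilter B ξ p) ^ 2 := by
        rw [Fintype.sum_prod_type]
        simp only [dotProduct_stackedFilter, sq]
        rfl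

end StackedFilter

theorem dec_correctness_general {n m m₁ m₂ r : ℕ}
    (X : Fin m → Submodule ℝ (Fin n → ℝ))
    (hXorth : ∀ i i' : Fin m, i ≠ i' → ∀ x ∈ X i, ∀ y ∈ X i', x ⬝ᵥ y = 0)
    (ξ : Fin m → Fin r → Fin n → ℝ)
    (hξON : ∀ (i : Fin m) (j j' : Fin r), ξ i j ⬝ᵥ ξ i j' = if j = j' then 1 else 0)
    (hξspan : ∀ i, Submodule.span ℝ (Set.range (ξ i)) = X i)
    (A : Matrix (Fin m₁) (Fin m) ℝ) (B : Matrix (Fin m₂) (Fin m) ℝ)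
    (hA : ∀ i j : Fin m₁, A i ⬝ᵥ A j = if i = j then 1 else 0)
    (hAB : ∀ (i : Fin m₂) (j : Fin m₁), B i ⬝ᵥ A j = 0)
    (hB : Bᵀ * B = 1 - Aᵀ * A) :
    ((⨆ i, X i) =
       Submodule.span ℝ (Set.range (stackedFilter A ξ)) ⊔
         Submodule.span ℝ (Set.range (stackedFilter B ξ))) ∧
    (Submodule.span ℝ (Set.range (stackedFilter A ξ)) ⊓
       Submodule.span ℝ (Set.range (stackedFilter B ξ)) = ⊥) ∧
    (∀ v ∈ Submodule.span ℝ (Set.range (stackedFilter A ξ)),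
       ∀ w ∈ Submodule.span ℝ (Set.range (stackedFilter B ξ)), v ⬝ᵥ w = 0) ∧
    (∀ p q : Fin r × Fin m₁,
       stackedFilter A ξ p ⬝ᵥ stackedFilter A ξ q = if p = q then 1 else 0) ∧
    (Module.finrank ℝ (Submodule.span ℝ (Set.range (stackedFilter A ξ))) = m₁ * r) ∧
    (∀ f ∈ Submodule.span ℝ (Set.range (stackedFilter B ξ)),
       f ⬝ᵥ f = ∑ p : Fin r × Fin m₂, (f ⬝ᵥ stackedFilter B ξ p) ^ 2) := by
  have hξ := dotProduct_orthonormal_of_orthogonal hXorth hξON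
    fun i j => hξspan i ▸ subset_span ⟨j, rfl⟩
  have hsup : (⨆ i, X i) = span ℝ (Set.range (stackedFilter A ξ)) ⊔
      span ℝ (Set.range (stackedFilter B ξ)) := by
    rw [span_stackedFilter_sup_span_stackedFilter (by rw [hB, add_sub_cancel]),
      ← iSup_span_eq_span_range_uncurry, funext hξspan]
  have horth : ∀ v ∈ span ℝ (Set.range (stackedFilter A ξ)),
      ∀ w ∈ span ℝ (Set.range (stackedFilter B ξ)), v ⬝ᵥ w = 0 := fun v hv w hw =>
    dotProduct_eq_zero_of_mem_span (fun p q => by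
      simp [stackedFilter_dotProduct_stackedFilter hξ, dotProduct_comm (A _), hAB]) hv hw
  have hAON : ∀ p q : Fin r × Fin m₁,
      stackedFilter A ξ p ⬝ᵥ stackedFilter A ξ q = if p = q then 1 else 0 := fun p q => by
    rw [stackedFilter_dotProduct_stackedFilter hξ, hA]
    by_cases h : p.1 = q.1 <;> simp [h, Prod.ext_iff]
  refine ⟨hsup, ?_, horth, hAON, ?_, fun f hf => ?_⟩
  · exact (Submodule.eq_bot_iff _).mpr fun x ⟨hxV, hxW⟩ =>
      dotProduct_self_eq_zero.mp (horth x hxV x hxW)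
  · rw [finrank_span_eq_card (linearIndependent_of_orthonormal hAON)]
    simp [mul_comm]
  · refine dotProduct_self_eq_sum_sq_dotProduct_stackedFilter hξ hB
      (span_stackedFilter_le B hf) fun p => ?_
    rw [dotProduct_comm]
    exact horth _ (subset_span ⟨p, rfl⟩) f hf

/-- (Lemma 3 of the paper: correctness of the decomposition DEC.) Given mutually
orthogonal `r`-dimensional subspaces `X_1, …, X_m` of `ℝ^n` with orthonormal bases
`{ξ_{i,j}}_j`, and filters `A`, `B` with orthonormal rows of `A`, rows of `B` orthogonal
to rows of `A`, and `BᵀB = I − AᵀA`, the stacked matrices `Aᶜ`, `Bᶜ` give an orthogonal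
decomposition `⊕ᵢ Xᵢ = V ⊕ W`, the rows of `Aᶜ` form an orthonormal basis of `V`
(so `dim V = m₁ r`), and the rows of `Bᶜ` form a tight frame for `W`. -/
theorem dec_correctness {n m m₁ m₂ r : ℕ}
    (hr : 1 ≤ r) (hm₁ : 1 ≤ m₁) (hm : m₁ < m)
    (X : Fin m → Submodule ℝ (Fin n → ℝ))
    (hXorth : ∀ i i' : Fin m, i ≠ i' → ∀ x ∈ X i, ∀ y ∈ X i', x ⬝ᵥ y = 0)
    (hXdim : ∀ i, Module.finrank ℝ (X i) = r)
    (ξ : Fin m → Fin r → Fin n → ℝ)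
    (hξON : ∀ (i : Fin m) (j j' : Fin r), ξ i j ⬝ᵥ ξ i j' = if j = j' then 1 else 0)
    (hξspan : ∀ i, Submodule.span ℝ (Set.range (ξ i)) = X i)
    (A : Matrix (Fin m₁) (Fin m) ℝ) (B : Matrix (Fin m₂) (Fin m) ℝ)
    (hA : ∀ i j : Fin m₁, A i ⬝ᵥ A j = if i = j then 1 else 0)
    (hAB : ∀ (i : Fin m₂) (j : Fin m₁), B i ⬝ᵥ A j = 0)
    (hB : Bᵀ * B = 1 - Aᵀ * A) :
    ((⨆ i, X i) =
       Submodule.span ℝ (Set.range (stackedFilter A ξ)) ⊔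
         Submodule.span ℝ (Set.range (stackedFilter B ξ))) ∧
    (Submodule.span ℝ (Set.range (stackedFilter A ξ)) ⊓
       Submodule.span ℝ (Set.range (stackedFilter B ξ)) = ⊥) ∧
    (∀ v ∈ Submodule.span ℝ (Set.range (stackedFilter A ξ)),
       ∀ w ∈ Submodule.span ℝ (Set.range (stackedFilter B ξ)), v ⬝ᵥ w = 0) ∧
    (∀ p q : Fin r × Fin m₁,
       stackedFilter A ξ p ⬝ᵥ stackedFilter A ξ q = if p = q then 1 else 0) ∧
    (Module.finrank ℝ (Submodule.span ℝ (Set.range (stackedFilter A ξ))) = m₁ * r) ∧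
    (∀ f ∈ Submodule.span ℝ (Set.range (stackedFilter B ξ)),
       f ⬝ᵥ f = ∑ p : Fin r × Fin m₂, (f ⬝ᵥ stackedFilter B ξ p) ^ 2) :=
  dec_correctness_general X hXorth ξ hξON hξspan A B hA hAB hB
end
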